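/- A system Σ in driving variable form is an implementation of a contract C = (A, G) if and only if A ∘ Σ ≼ G. -/

import Mathlib

/-! Taking the assumptions themselves as environment gives one direction, since `≼` is reflexive.
Conversely, a full simulation relation `S` of `E` by `A` yields one of `E ∘ Σ` by `A ∘ Σ`, namely
`((e, x), (a, x))` with `(e, x) ∈ V*(E ∘ Σ)` and `(e, a) ∈ S`, and `≼` is transitive. -/

/-- A linear system in driving variable form `ẋ = A x + G d`, `w = C x`, `0 = H x`. -/
structure DVSystem (X W D Y : Type)
    [AddCommGroup X] [Module ℝ X] [AddCommGroup W] [Module ℝ W]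
    [AddCommGroup D] [Module ℝ D] [AddCommGroup Y] [Module ℝ Y] where
  A : X →ₗ[ℝ] X
  G : D →ₗ[ℝ] X
  C : X →ₗ[ℝ] W
  H : X →ₗ[ℝ] Y

namespace DVSystem

section basic

variable {X W D Y : Type}
  [AddCommGroup X] [Module ℝ X] [AddCommGroup W] [Module ℝ W]
  [AddCommGroup D] [Module ℝ D] [AddCommGroup Y] [Module ℝ Y]

/-- A subspace `U` is consistent-admissible if `A U ⊆ U + im G` and `U ⊆ ker H`. -/
def Admissible (P : DVSystem X W D Y) (U : Submodule ℝ X) : Prop :=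
  U.map P.A ≤ U ⊔ LinearMap.range P.G ∧ U ≤ LinearMap.ker P.H

/-- The consistent subspace `V*`: the largest consistent-admissible subspace. -/
def V (P : DVSystem X W D Y) : Submodule ℝ X :=
  sSup {U | P.Admissible U}

end basic

section sim

variable {W : Type} [AddCommGroup W] [Module ℝ W]
variable {X₁ D₁ Y₁ : Type} [AddCommGroup X₁] [Module ℝ X₁]
  [AddCommGroup D₁] [Module ℝ D₁] [AddCommGroup Y₁] [Module ℝ Y₁]
variable {X₂ D₂ Y₂ : Type} [AddCommGroup X₂] [Module ℝ X₂]
  [AddCommGroup D₂] [Module ℝ D₂] [AddCommGroup Y₂] [Module ℝ Y₂]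

/-- Items (i)-(ii) of the (algebraic) definition of a simulation relation. -/
def SimConds (P₁ : DVSystem X₁ W D₁ Y₁) (P₂ : DVSystem X₂ W D₂ Y₂)
    (S : Submodule ℝ (X₁ × X₂)) : Prop :=
  ∀ x₁ x₂, (x₁, x₂) ∈ S →
    (∀ d₁ : D₁, P₁.A x₁ + P₁.G d₁ ∈ P₁.V →
      ∃ d₂ : D₂, P₂.A x₂ + P₂.G d₂ ∈ P₂.V ∧
        (P₁.A x₁ + P₁.G d₁, P₂.A x₂ + P₂.G d₂) ∈ S) ∧
    P₁.C x₁ = P₂.C x₂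

/-- `S` is a simulation relation of `P₁` by `P₂`. -/
def IsSimRel (P₁ : DVSystem X₁ W D₁ Y₁) (P₂ : DVSystem X₂ W D₂ Y₂)
    (S : Submodule ℝ (X₁ × X₂)) : Prop :=
  S.map (LinearMap.fst ℝ X₁ X₂) ≤ P₁.V ∧ S.map (LinearMap.snd ℝ X₁ X₂) ≤ P₂.V ∧
    SimConds P₁ P₂ S

/-- `S` is a full simulation relation of `P₁` by `P₂`: in addition `π₁(S) = V₁*`. -/
def IsFullSimRel (P₁ : DVSystem X₁ W D₁ Y₁) (P₂ : DVSystem X₂ W D₂ Y₂)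
    (S : Submodule ℝ (X₁ × X₂)) : Prop :=
  IsSimRel P₁ P₂ S ∧ S.map (LinearMap.fst ℝ X₁ X₂) = P₁.V

/-- `P₁ ≼ P₂`: `P₁` is simulated by `P₂`. -/
def Simulates (P₁ : DVSystem X₁ W D₁ Y₁) (P₂ : DVSystem X₂ W D₂ Y₂) : Prop :=
  ∃ S : Submodule ℝ (X₁ × X₂), IsFullSimRel P₁ P₂ S

/-- The composition `P₁ ∘ P₂` obtained by sharing the external variable `w₁ = w₂`. -/
noncomputable def comp (P₁ : DVSystem X₁ W D₁ Y₁) (P₂ : DVSystem X₂ W D₂ Y₂) :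
    DVSystem (X₁ × X₂) W (D₁ × D₂) (Y₁ × Y₂ × W) where
  A := P₁.A.prodMap P₂.A
  G := P₁.G.prodMap P₂.G
  C := (1/2 : ℝ) • (P₁.C ∘ₗ LinearMap.fst ℝ X₁ X₂ + P₂.C ∘ₗ LinearMap.snd ℝ X₁ X₂)
  H := (P₁.H ∘ₗ LinearMap.fst ℝ X₁ X₂).prod
    ((P₂.H ∘ₗ LinearMap.snd ℝ X₁ X₂).prod
      (P₁.C ∘ₗ LinearMap.fst ℝ X₁ X₂ - P₂.C ∘ₗ LinearMap.snd ℝ X₁ X₂))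

end sim

section relcomp

variable {X₁ X₂ X₃ : Type} [AddCommGroup X₁] [Module ℝ X₁]
  [AddCommGroup X₂] [Module ℝ X₂] [AddCommGroup X₃] [Module ℝ X₃]

/-- Composition of linear relations:
`{(x₁, x₃) | ∃ x₂, (x₁, x₂) ∈ S₁₂ ∧ (x₂, x₃) ∈ S₂₃}`. -/
def relComp (S₁₂ : Submodule ℝ (X₁ × X₂)) (S₂₃ : Submodule ℝ (X₂ × X₃)) :
    Submodule ℝ (X₁ × X₃) where
  carrier := {p | ∃ x₂, (p.1, x₂) ∈ S₁₂ ∧ (x₂, p.2) ∈ S₂₃}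
  zero_mem' := ⟨0, by exact S₁₂.zero_mem, by exact S₂₃.zero_mem⟩
  add_mem' := by
    rintro a b ⟨y, hy1, hy2⟩ ⟨z, hz1, hz2⟩
    exact ⟨y + z, S₁₂.add_mem hy1 hz1, S₂₃.add_mem hy2 hz2⟩
  smul_mem' := by
    rintro c a ⟨y, h1, h2⟩
    exact ⟨c • y, S₁₂.smul_mem c h1, S₂₃.smul_mem c h2⟩

/-- The pairing `{(x, (x₁, x₂)) | (x, x₁) ∈ S₁ ∧ (x, x₂) ∈ S₂}` of two relations. -/
def pairRel (S₁ : Submodule ℝ (X₁ × X₂)) (S₂ : Submodule ℝ (X₁ × X₃)) :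
    Submodule ℝ (X₁ × X₂ × X₃) where
  carrier := {p | (p.1, p.2.1) ∈ S₁ ∧ (p.1, p.2.2) ∈ S₂}
  zero_mem' := ⟨by exact S₁.zero_mem, by exact S₂.zero_mem⟩
  add_mem' := by
    rintro a b ⟨ha1, ha2⟩ ⟨hb1, hb2⟩
    exact ⟨S₁.add_mem ha1 hb1, S₂.add_mem ha2 hb2⟩
  smul_mem' := by
    rintro c a ⟨h1, h2⟩
    exact ⟨S₁.smul_mem c h1, S₂.smul_mem c h2⟩

end relcomp

section contract

variable {W : Type} [AddCommGroup W] [Module ℝ W]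
variable {X D Y Xa Da Ya Xg Dg Yg : Type}
  [AddCommGroup X] [Module ℝ X] [AddCommGroup D] [Module ℝ D]
  [AddCommGroup Y] [Module ℝ Y]
  [AddCommGroup Xa] [Module ℝ Xa] [AddCommGroup Da] [Module ℝ Da]
  [AddCommGroup Ya] [Module ℝ Ya]
  [AddCommGroup Xg] [Module ℝ Xg] [AddCommGroup Dg] [Module ℝ Dg]
  [AddCommGroup Yg] [Module ℝ Yg]

/-- `Sys` implements the contract `(Ass, Gar)` if `E ∘ Sys ≼ Gar` for every
compatible environment `E`, i.e., every environment with `E ≼ Ass`. -/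
def Implements (Sys : DVSystem X W D Y)
    (Ass : DVSystem Xa W Da Ya) (Gar : DVSystem Xg W Dg Yg) : Prop :=
  ∀ (Xe De Ye : Type) [AddCommGroup Xe] [Module ℝ Xe] [FiniteDimensional ℝ Xe]
    [AddCommGroup De] [Module ℝ De] [FiniteDimensional ℝ De]
    [AddCommGroup Ye] [Module ℝ Ye] [FiniteDimensional ℝ Ye]
    (E : DVSystem Xe W De Ye),
    Simulates E Ass → Simulates (comp E Sys) Gar

end contract

section refine

variable {W : Type} [AddCommGroup W] [Module ℝ W]
variable {Xa Da Ya Xg Dg Yg Xa' Da' Ya' Xg' Dg' Yg' : Type}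
  [AddCommGroup Xa] [Module ℝ Xa] [AddCommGroup Da] [Module ℝ Da]
  [AddCommGroup Ya] [Module ℝ Ya]
  [AddCommGroup Xg] [Module ℝ Xg] [AddCommGroup Dg] [Module ℝ Dg]
  [AddCommGroup Yg] [Module ℝ Yg]
  [AddCommGroup Xa'] [Module ℝ Xa'] [AddCommGroup Da'] [Module ℝ Da']
  [AddCommGroup Ya'] [Module ℝ Ya']
  [AddCommGroup Xg'] [Module ℝ Xg'] [AddCommGroup Dg'] [Module ℝ Dg']
  [AddCommGroup Yg'] [Module ℝ Yg']

/-- The contract `(Ass', Gar')` refines the contract `(Ass, Gar)`: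
`Ass ≼ Ass'` and `Ass ∘ Gar' ≼ Gar`. -/
def Refines (Ass' : DVSystem Xa' W Da' Ya') (Gar' : DVSystem Xg' W Dg' Yg')
    (Ass : DVSystem Xa W Da Ya) (Gar : DVSystem Xg W Dg Yg) : Prop :=
  Simulates Ass Ass' ∧ Simulates (comp Ass Gar') Gar

end refine

section consistent

variable {X W D Y : Type}
  [AddCommGroup X] [Module ℝ X] [AddCommGroup W] [Module ℝ W]
  [AddCommGroup D] [Module ℝ D] [AddCommGroup Y] [Module ℝ Y]
  {P : DVSystem X W D Y} {U : Submodule ℝ X}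

theorem admissible_iff :
    P.Admissible U ↔ (∀ x ∈ U, ∃ d, P.A x + P.G d ∈ U) ∧ U ≤ LinearMap.ker P.H := by
  refine and_congr_left' ⟨fun h x hx => ?_, fun h => ?_⟩
  · obtain ⟨u, hu, _, ⟨d, rfl⟩, hud⟩ := Submodule.mem_sup.mp (h (Submodule.mem_map_of_mem hx))
    exact ⟨-d, by rwa [map_neg, ← hud, add_neg_cancel_right]⟩
  · rintro _ ⟨x, hx, rfl⟩
    obtain ⟨d, hd⟩ := h x hx
    exact Submodule.mem_sup.mpr ⟨_, hd, _, ⟨-d, rfl⟩, by rw [map_neg, add_neg_cancel_right]⟩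

theorem admissible_V (P : DVSystem X W D Y) : P.Admissible P.V := by
  refine ⟨?_, sSup_le fun U hU => hU.2⟩
  rw [V, (Submodule.gc_map_comap P.A).l_sSup]
  exact iSup₂_le fun U hU => hU.1.trans (sup_le_sup_right (le_sSup hU) _)

theorem le_V (h : P.Admissible U) : U ≤ P.V :=
  le_sSup h

theorem exists_A_add_G_mem_V {x : X} (hx : x ∈ P.V) : ∃ d, P.A x + P.G d ∈ P.V :=
  (admissible_iff.mp (admissible_V P)).1 x hx

theorem H_eq_zero_of_mem_V {x : X} (hx : x ∈ P.V) : P.H x = 0 :=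
  (admissible_V P).2 hx

end consistent

section comp

variable {W : Type} [AddCommGroup W] [Module ℝ W]
  {X₁ D₁ Y₁ : Type} [AddCommGroup X₁] [Module ℝ X₁]
  [AddCommGroup D₁] [Module ℝ D₁] [AddCommGroup Y₁] [Module ℝ Y₁]
  {X₂ D₂ Y₂ : Type} [AddCommGroup X₂] [Module ℝ X₂]
  [AddCommGroup D₂] [Module ℝ D₂] [AddCommGroup Y₂] [Module ℝ Y₂]
  (P₁ : DVSystem X₁ W D₁ Y₁) (P₂ : DVSystem X₂ W D₂ Y₂)

theorem mem_ker_comp_H {p : X₁ × X₂} :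
    p ∈ LinearMap.ker (comp P₁ P₂).H ↔ P₁.H p.1 = 0 ∧ P₂.H p.2 = 0 ∧ P₁.C p.1 = P₂.C p.2 := by
  simp [comp, sub_eq_zero]

variable {P₁ P₂}

theorem fst_mem_V_of_mem_comp_V {p : X₁ × X₂} (hp : p ∈ (comp P₁ P₂).V) : p.1 ∈ P₁.V := by
  refine le_V (admissible_iff.mpr ⟨?_, ?_⟩) (Submodule.mem_map_of_mem (f := LinearMap.fst ℝ _ _) hp)
  · rintro _ ⟨q, hq, rfl⟩
    obtain ⟨d, hd⟩ := exists_A_add_G_mem_V hq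
    exact ⟨d.1, _, hd, rfl⟩
  · rintro _ ⟨q, hq, rfl⟩
    exact ((mem_ker_comp_H P₁ P₂).mp (H_eq_zero_of_mem_V hq)).1

end comp

section simulation

variable {W : Type} [AddCommGroup W] [Module ℝ W]
  {X₁ D₁ Y₁ : Type} [AddCommGroup X₁] [Module ℝ X₁]
  [AddCommGroup D₁] [Module ℝ D₁] [AddCommGroup Y₁] [Module ℝ Y₁]
  {X₂ D₂ Y₂ : Type} [AddCommGroup X₂] [Module ℝ X₂]
  [AddCommGroup D₂] [Module ℝ D₂] [AddCommGroup Y₂] [Module ℝ Y₂]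
  {X₃ D₃ Y₃ : Type} [AddCommGroup X₃] [Module ℝ X₃]
  [AddCommGroup D₃] [Module ℝ D₃] [AddCommGroup Y₃] [Module ℝ Y₃]
  {X D Y : Type} [AddCommGroup X] [Module ℝ X]
  [AddCommGroup D] [Module ℝ D] [AddCommGroup Y] [Module ℝ Y]
  {P₁ : DVSystem X₁ W D₁ Y₁} {P₂ : DVSystem X₂ W D₂ Y₂} {P₃ : DVSystem X₃ W D₃ Y₃}
  {S : Submodule ℝ (X₁ × X₂)}

theorem IsSimRel.isFullSimRel (h : IsSimRel P₁ P₂ S)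
    (hfull : P₁.V ≤ S.map (LinearMap.fst ℝ X₁ X₂)) : IsFullSimRel P₁ P₂ S :=
  ⟨h, le_antisymm h.1 hfull⟩

theorem Simulates.refl (P : DVSystem X₁ W D₁ Y₁) : Simulates P P := by
  refine ⟨P.V.map (LinearMap.id.prod LinearMap.id), IsSimRel.isFullSimRel ⟨?_, ?_, ?_⟩ ?_⟩
  · rintro _ ⟨_, ⟨x, hx, rfl⟩, rfl⟩
    exact hx
  · rintro _ ⟨_, ⟨x, hx, rfl⟩, rfl⟩
    exact hx
  · rintro _ _ ⟨x, -, ⟨⟩⟩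
    exact ⟨fun d hd => ⟨d, hd, _, hd, rfl⟩, rfl⟩
  · exact fun x hx => ⟨(x, x), ⟨x, hx, rfl⟩, rfl⟩

theorem Simulates.trans (h₁₂ : Simulates P₁ P₂) (h₂₃ : Simulates P₂ P₃) : Simulates P₁ P₃ := by
  obtain ⟨S, ⟨hS₁, hS₂, hS⟩, hS_full⟩ := h₁₂
  obtain ⟨T, ⟨-, hT₃, hT⟩, hT_full⟩ := h₂₃
  refine ⟨relComp S T, IsSimRel.isFullSimRel ⟨?_, ?_, ?_⟩ ?_⟩
  · rintro _ ⟨_, ⟨x₂, hS', -⟩, rfl⟩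
    exact hS₁ ⟨_, hS', rfl⟩
  · rintro _ ⟨_, ⟨x₂, -, hT'⟩, rfl⟩
    exact hT₃ ⟨_, hT', rfl⟩
  · rintro x₁ x₃ ⟨x₂, hx₁₂, hx₂₃⟩
    refine ⟨fun d₁ hd₁ => ?_, (hS x₁ x₂ hx₁₂).2.trans (hT x₂ x₃ hx₂₃).2⟩
    obtain ⟨d₂, hd₂, hS'⟩ := (hS x₁ x₂ hx₁₂).1 d₁ hd₁
    obtain ⟨d₃, hd₃, hT'⟩ := (hT x₂ x₃ hx₂₃).1 d₂ hd₂
    exact ⟨d₃, hd₃, _, hS', hT'⟩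
  · intro x₁ hx₁
    obtain ⟨⟨_, x₂⟩, hx₁₂, rfl⟩ := hS_full ▸ hx₁
    obtain ⟨⟨_, x₃⟩, hx₂₃, rfl⟩ := hT_full ▸ hS₂ ⟨_, hx₁₂, rfl⟩
    exact ⟨(_, x₃), ⟨_, hx₁₂, hx₂₃⟩, rfl⟩

/-- A step of `P₁` inside `V₁*` is matched through `S` by a step of `P₂` inside `V₂*`, while `P`
makes the same step as before. -/
theorem map_snd_pairRel_le_comp_V (hS : IsSimRel P₁ P₂ S) (P : DVSystem X W D Y) :
    (pairRel S (comp P₁ P).V).map (LinearMap.snd ℝ X₁ (X₂ × X)) ≤ (comp P₂ P).V := by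
  obtain ⟨-, hS₂, hS⟩ := hS
  refine le_V (admissible_iff.mpr ⟨?_, ?_⟩)
  · rintro _ ⟨⟨x₁, x₂, x⟩, ⟨hx₁₂, hx₁⟩, rfl⟩
    obtain ⟨d, hd⟩ := exists_A_add_G_mem_V hx₁
    obtain ⟨d₂, -, hd₂⟩ := (hS x₁ x₂ hx₁₂).1 d.1 (fst_mem_V_of_mem_comp_V hd)
    exact ⟨(d₂, d.2), ⟨_, _, _⟩, ⟨hd₂, hd⟩, rfl⟩
  · rintro _ ⟨⟨x₁, x₂, x⟩, ⟨hx₁₂, hx₁⟩, rfl⟩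
    obtain ⟨-, hH, hC⟩ := (mem_ker_comp_H P₁ P).mp (H_eq_zero_of_mem_V hx₁)
    refine (mem_ker_comp_H P₂ P).mpr ⟨H_eq_zero_of_mem_V (hS₂ ⟨_, hx₁₂, rfl⟩), hH, ?_⟩
    exact (hS x₁ x₂ hx₁₂).2 ▸ hC

theorem Simulates.comp_right (h : Simulates P₁ P₂) (P : DVSystem X W D Y) :
    Simulates (comp P₁ P) (comp P₂ P) := by
  obtain ⟨S, hS, hS_full⟩ := h
  have hV₂ := map_snd_pairRel_le_comp_V hS P
  obtain ⟨-, -, hS⟩ := hS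
  -- `f (x₁, x₂, x) = ((x₁, x), (x₂, x))`
  let f := ((LinearMap.fst ℝ X₁ (X₂ × X)).prod
    (LinearMap.snd ℝ X₂ X ∘ₗ LinearMap.snd ℝ X₁ (X₂ × X))).prod (LinearMap.snd ℝ X₁ (X₂ × X))
  refine ⟨(pairRel S (comp P₁ P).V).map f, IsSimRel.isFullSimRel ⟨?_, ?_, ?_⟩ ?_⟩
  · rintro _ ⟨_, ⟨⟨x₁, x₂, x⟩, ⟨-, hx₁⟩, rfl⟩, rfl⟩
    exact hx₁
  · rintro _ ⟨_, ⟨q, hq, rfl⟩, rfl⟩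
    exact hV₂ ⟨q, hq, rfl⟩
  · rintro _ _ ⟨⟨x₁, x₂, x⟩, ⟨hx₁₂, hx₁⟩, h⟩
    obtain ⟨rfl, rfl⟩ := Prod.ext_iff.mp h
    refine ⟨fun d hd => ?_, ?_⟩
    · obtain ⟨d₂, -, hd₂⟩ := (hS x₁ x₂ hx₁₂).1 d.1 (fst_mem_V_of_mem_comp_V hd)
      exact ⟨(d₂, d.2), hV₂ ⟨⟨_, _, _⟩, ⟨hd₂, hd⟩, rfl⟩, ⟨_, _, _⟩, ⟨hd₂, hd⟩, rfl⟩
    · show (1 / 2 : ℝ) • (P₁.C x₁ + P.C x) = (1 / 2 : ℝ) • (P₂.C x₂ + P.C x)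
      rw [(hS x₁ x₂ hx₁₂).2]
  · rintro p hp
    obtain ⟨⟨_, x₂⟩, hx₁₂, rfl⟩ := hS_full ▸ fst_mem_V_of_mem_comp_V hp
    exact ⟨_, ⟨(_, x₂, p.2), ⟨hx₁₂, hp⟩, rfl⟩, rfl⟩

end simulation

end DVSystem

open DVSystem

theorem implements_iff_comp_simulates_general {W : Type} [AddCommGroup W] [Module ℝ W]
    {X D Y : Type} [AddCommGroup X] [Module ℝ X]
    [AddCommGroup D] [Module ℝ D]
    [AddCommGroup Y] [Module ℝ Y]
    {Xa Da Ya : Type} [AddCommGroup Xa] [Module ℝ Xa] [FiniteDimensional ℝ Xa]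
    [AddCommGroup Da] [Module ℝ Da] [FiniteDimensional ℝ Da]
    [AddCommGroup Ya] [Module ℝ Ya] [FiniteDimensional ℝ Ya]
    {Xg Dg Yg : Type} [AddCommGroup Xg] [Module ℝ Xg]
    [AddCommGroup Dg] [Module ℝ Dg]
    [AddCommGroup Yg] [Module ℝ Yg]
    (Sys : DVSystem X W D Y) (Ass : DVSystem Xa W Da Ya) (Gar : DVSystem Xg W Dg Yg) :
    Implements Sys Ass Gar ↔ Simulates (comp Ass Sys) Gar :=
  ⟨fun h => h Xa Da Ya Ass (Simulates.refl Ass),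
    fun h _ _ _ _ _ _ _ _ _ _ _ _ _ hE => (hE.comp_right Sys).trans h⟩

/-- A system implements the contract `(Ass, Gar)` iff `Ass ∘ Σ ≼ Gar`. -/
theorem implements_iff_comp_simulates {W : Type} [AddCommGroup W] [Module ℝ W] [FiniteDimensional ℝ W]
    {X D Y : Type} [AddCommGroup X] [Module ℝ X] [FiniteDimensional ℝ X]
    [AddCommGroup D] [Module ℝ D] [FiniteDimensional ℝ D]
    [AddCommGroup Y] [Module ℝ Y] [FiniteDimensional ℝ Y]
    {Xa Da Ya : Type} [AddCommGroup Xa] [Module ℝ Xa] [FiniteDimensional ℝ Xa]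
    [AddCommGroup Da] [Module ℝ Da] [FiniteDimensional ℝ Da]
    [AddCommGroup Ya] [Module ℝ Ya] [FiniteDimensional ℝ Ya]
    {Xg Dg Yg : Type} [AddCommGroup Xg] [Module ℝ Xg] [FiniteDimensional ℝ Xg]
    [AddCommGroup Dg] [Module ℝ Dg] [FiniteDimensional ℝ Dg]
    [AddCommGroup Yg] [Module ℝ Yg] [FiniteDimensional ℝ Yg]
    (Sys : DVSystem X W D Y) (Ass : DVSystem Xa W Da Ya) (Gar : DVSystem Xg W Dg Yg) :
    Implements Sys Ass Gar ↔ Simulates (comp Ass Sys) Gar :=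
  implements_iff_comp_simulates_general Sys Ass Gar
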